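/- arXiv:2406.06452 — 6 statements merged into one kernel-verified Lean document; each statement's English description precedes it below -/
import Mathlib

section
/- Suppose the instrument Z is independent (as random variables) of the ℝ⁴-valued random vector (Y₁, Y₀, A₁, A₀), and 0 < μ(Z = 1) < 1. Then E[Y | Z = 1] − E[Y | Z = 0] = ∫ (Y(A₁) − Y(A₀)) dμ, i.e., the intent-to-treat contrast in observed outcomes between encouraged and non-encouraged units equals the expected difference between the outcome under the encouraged potential treatment and the outcome under the non-encouraged potential treatment. (This is Equation (1) in the paper's identification proof, stated conditionally on a covariate value.) -/
open MeasureTheory ProbabilityTheory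

lemma cond_integral_eq_of_indep
    {Ω : Type*} [MeasurableSpace Ω] (μ : Measure Ω) [IsProbabilityMeasure μ]
    (W : Ω → ℝ) (s : Set Ω) (hs : MeasurableSet s)
    (hW : Integrable W μ)
    (hind : IndepFun (s.indicator (fun _ => (1 : ℝ))) W μ)
    (hpos : μ s ≠ 0) :
    ∫ ω, W ω ∂(μ[|s]) = ∫ ω, W ω ∂μ := by
  have hfin : μ s ≠ ⊤ := (measure_lt_top μ s).ne
  have hInd : Integrable (s.indicator (fun _ => (1 : ℝ))) μ :=
    (integrable_const (1 : ℝ)).indicator hs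
  have hmul : ∫ ω, (s.indicator (fun _ => (1 : ℝ))) ω * W ω ∂μ
      = (∫ ω, (s.indicator (fun _ => (1 : ℝ))) ω ∂μ) * ∫ ω, W ω ∂μ :=
    hind.integral_mul_eq_mul_integral hInd.1 hW.1
  have hindint : ∫ ω, (s.indicator (fun _ => (1 : ℝ))) ω ∂μ = (μ s).toReal := by
    rw [integral_indicator hs]; simp [Measure.restrict_apply_univ, measureReal_def]
  have hset : ∫ ω in s, W ω ∂μ = (μ s).toReal * ∫ ω, W ω ∂μ := by
    rw [← integral_indicator hs]
    have : ∀ ω, s.indicator W ω = (s.indicator (fun _ => (1 : ℝ))) ω * W ω := by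
      intro ω; by_cases h : ω ∈ s <;> simp [h]
    rw [integral_congr_ae (ae_of_all _ this), hmul, hindint]
  rw [ProbabilityTheory.cond, integral_smul_measure, hset, smul_eq_mul, ← mul_assoc,
    ENNReal.toReal_inv, inv_mul_cancel₀, one_mul]
  exact ENNReal.toReal_ne_zero.2 ⟨hpos, hfin⟩

/-- Intent-to-treat identification (Equation (1) of the paper's identification proof, stated
conditionally on a covariate value): if the instrument `Z` is independent of the random
vector `(Y₁, Y₀, A₁, A₀)` and `0 < μ(Z = 1) < 1`, then
`E[Y | Z = 1] − E[Y | Z = 0] = ∫ (Y(A₁) − Y(A₀)) dμ`, where `Y(a) := a·Y₁ + (1−a)·Y₀`,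
`A := Z·A₁ + (1−Z)·A₀` and `Y := A·Y₁ + (1−A)·Y₀`. -/
theorem itt_contrast_eq_potential_outcome_diff
    {Ω : Type*} [MeasurableSpace Ω] (μ : Measure Ω) [IsProbabilityMeasure μ]
    (Z A₁ A₀ Y₁ Y₀ A Y : Ω → ℝ)
    (hZ : Measurable Z) (hA₁ : Measurable A₁) (hA₀ : Measurable A₀)
    (hZ01 : ∀ ω, Z ω = 0 ∨ Z ω = 1)
    (hA₁01 : ∀ ω, A₁ ω = 0 ∨ A₁ ω = 1) (hA₀01 : ∀ ω, A₀ ω = 0 ∨ A₀ ω = 1)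
    (hY₁ : Integrable Y₁ μ) (hY₀ : Integrable Y₀ μ)
    (hA : ∀ ω, A ω = Z ω * A₁ ω + (1 - Z ω) * A₀ ω)
    (hY : ∀ ω, Y ω = A ω * Y₁ ω + (1 - A ω) * Y₀ ω)
    (hindep : IndepFun Z (fun ω => (Y₁ ω, Y₀ ω, A₁ ω, A₀ ω)) μ)
    (hpos : 0 < μ {ω | Z ω = 1}) (hlt : μ {ω | Z ω = 1} < 1) :
    (∫ ω, Y ω ∂(μ[|{ω | Z ω = 1}])) - (∫ ω, Y ω ∂(μ[|{ω | Z ω = 0}]))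
      = ∫ ω, ((A₁ ω * Y₁ ω + (1 - A₁ ω) * Y₀ ω)
          - (A₀ ω * Y₁ ω + (1 - A₀ ω) * Y₀ ω)) ∂μ := by
  set W₁ : Ω → ℝ := fun ω => A₁ ω * Y₁ ω + (1 - A₁ ω) * Y₀ ω with hW₁def
  set W₀ : Ω → ℝ := fun ω => A₀ ω * Y₁ ω + (1 - A₀ ω) * Y₀ ω with hW₀def
  have hs1 : MeasurableSet {ω | Z ω = 1} := hZ (measurableSet_singleton 1)
  have hs0 : MeasurableSet {ω | Z ω = 0} := hZ (measurableSet_singleton 0)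
  -- integrability
  have hIW : ∀ (B : Ω → ℝ), Measurable B → (∀ ω, B ω = 0 ∨ B ω = 1) →
      Integrable (fun ω => B ω * Y₁ ω + (1 - B ω) * Y₀ ω) μ := by
    intro B hB hB01
    refine (hY₁.bdd_mul hB.aestronglyMeasurable (c := 1) (ae_of_all _ fun ω => ?_)).add
      (hY₀.bdd_mul (hB.const_sub 1).aestronglyMeasurable (c := 1) (ae_of_all _ fun ω => ?_))
    · rcases hB01 ω with h | h <;> simp [h]
    · rcases hB01 ω with h | h <;> simp [h]
  have hIW₁ : Integrable W₁ μ := hIW A₁ hA₁ hA₁01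
  have hIW₀ : Integrable W₀ μ := hIW A₀ hA₀ hA₀01
  -- independence of indicators with W₁ and W₀
  have hindW : ∀ (c : ℝ) (f : ℝ × ℝ × ℝ × ℝ → ℝ), Measurable f →
      IndepFun (({ω | Z ω = c}).indicator (fun _ => (1 : ℝ)))
        (fun ω => f (Y₁ ω, Y₀ ω, A₁ ω, A₀ ω)) μ := by
    intro c f hf
    have hg : Measurable (({c} : Set ℝ).indicator (fun _ => (1 : ℝ))) :=
      measurable_const.indicator (measurableSet_singleton c)
    have := hindep.comp hg hf
    have heq : (({c} : Set ℝ).indicator (fun _ => (1 : ℝ))) ∘ Z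
        = ({ω | Z ω = c}).indicator (fun _ => (1 : ℝ)) := by
      funext ω; by_cases h : Z ω = c <;> simp [Function.comp, h, Set.indicator_apply]
    rwa [heq] at this
  have hf₁ : Measurable (fun p : ℝ × ℝ × ℝ × ℝ => p.2.2.1 * p.1 + (1 - p.2.2.1) * p.2.1) := by
    fun_prop
  have hf₀ : Measurable (fun p : ℝ × ℝ × ℝ × ℝ => p.2.2.2 * p.1 + (1 - p.2.2.2) * p.2.1) := by
    fun_prop
  have hind₁ : IndepFun (({ω | Z ω = 1}).indicator (fun _ => (1 : ℝ))) W₁ μ := by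
    have := hindW 1 _ hf₁
    exact this
  have hind₀ : IndepFun (({ω | Z ω = 0}).indicator (fun _ => (1 : ℝ))) W₀ μ := by
    have := hindW 0 _ hf₀
    exact this
  -- positivity of μ {Z = 0}
  have hcompl : {ω | Z ω = 0} = {ω | Z ω = 1}ᶜ := by
    ext ω; rcases hZ01 ω with h | h <;> simp [h]
  have hpos0 : μ {ω | Z ω = 0} ≠ 0 := by
    rw [hcompl, prob_compl_eq_one_sub hs1]
    intro h
    have := tsub_eq_zero_iff_le.mp h
    exact absurd this (not_le.2 hlt)
  -- Y equals W₁ a.e. w.r.t. μ[|{Z = 1}], and W₀ a.e. w.r.t. μ[|{Z = 0}]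
  have haeeq : ∀ (c : ℝ) (B : Ω → ℝ), MeasurableSet {ω | Z ω = c} →
      (∀ ω ∈ {ω | Z ω = c}, Y ω = B ω) →
      ∫ ω, Y ω ∂(μ[|{ω | Z ω = c}]) = ∫ ω, B ω ∂(μ[|{ω | Z ω = c}]) := by
    intro c B hms hon
    refine integral_congr_ae ?_
    have hnull : μ[|{ω | Z ω = c}] ({ω | Z ω = c}ᶜ) = 0 := by
      rw [cond_apply hms]; simp
    refine measure_mono_null (fun ω hω => ?_) hnull
    show ω ∉ {ω | Z ω = c}
    exact fun hmem => hω (hon ω hmem)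
  have hon1 : ∀ ω ∈ {ω | Z ω = 1}, Y ω = W₁ ω := by
    intro ω hω
    have hz : Z ω = 1 := hω
    simp [hY ω, hA ω, hz, hW₁def]
  have hon0 : ∀ ω ∈ {ω | Z ω = 0}, Y ω = W₀ ω := by
    intro ω hω
    have hz : Z ω = 0 := hω
    simp [hY ω, hA ω, hz, hW₀def]
  rw [haeeq 1 W₁ hs1 hon1, haeeq 0 W₀ hs0 hon0,
    cond_integral_eq_of_indep μ W₁ _ hs1 hIW₁ hind₁ hpos.ne',
    cond_integral_eq_of_indep μ W₀ _ hs0 hIW₀ hind₀ hpos0,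
    ← integral_sub hIW₁ hIW₀]
end

section
/- Suppose Y₁ − Y₀ and A₁ − A₀ are independent random variables (the unconfounded compliance assumption). Then Y(A₁) − Y(A₀) = (Y₁ − Y₀)·(A₁ − A₀) holds pointwise on Ω, and consequently ∫ (Y(A₁) − Y(A₀)) dμ = (∫ (Y₁ − Y₀) dμ) · (∫ (A₁ − A₀) dμ). (This is Equation (2) in the paper's identification proof, stated conditionally on a covariate value.) -/
open MeasureTheory ProbabilityTheory

/-- Equation (2) of the paper's identification proof, stated conditionally on a covariate
value: under unconfounded compliance (`Y₁ − Y₀` independent of `A₁ − A₀`),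
`Y(A₁) − Y(A₀) = (Y₁ − Y₀)·(A₁ − A₀)` pointwise, and hence
`∫ (Y(A₁) − Y(A₀)) dμ = (∫ (Y₁ − Y₀) dμ) · (∫ (A₁ − A₀) dμ)`, with `Y(a) := a·Y₁ + (1−a)·Y₀`. -/
theorem potential_outcome_diff_eq_effect_mul_compliance
    {Ω : Type*} [MeasurableSpace Ω] (μ : Measure Ω) [IsProbabilityMeasure μ]
    (A₁ A₀ Y₁ Y₀ : Ω → ℝ)
    (hA₁ : Measurable A₁) (hA₀ : Measurable A₀)
    (hA₁01 : ∀ ω, A₁ ω = 0 ∨ A₁ ω = 1) (hA₀01 : ∀ ω, A₀ ω = 0 ∨ A₀ ω = 1)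
    (hY₁ : Integrable Y₁ μ) (hY₀ : Integrable Y₀ μ)
    (hindep : IndepFun (fun ω => Y₁ ω - Y₀ ω) (fun ω => A₁ ω - A₀ ω) μ) :
    (∀ ω, (A₁ ω * Y₁ ω + (1 - A₁ ω) * Y₀ ω) - (A₀ ω * Y₁ ω + (1 - A₀ ω) * Y₀ ω)
        = (Y₁ ω - Y₀ ω) * (A₁ ω - A₀ ω))
    ∧ ∫ ω, ((A₁ ω * Y₁ ω + (1 - A₁ ω) * Y₀ ω) - (A₀ ω * Y₁ ω + (1 - A₀ ω) * Y₀ ω)) ∂μ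
        = (∫ ω, (Y₁ ω - Y₀ ω) ∂μ) * (∫ ω, (A₁ ω - A₀ ω) ∂μ) := by
  refine ⟨fun ω => by ring, ?_⟩
  have h1 : ∫ ω, ((A₁ ω * Y₁ ω + (1 - A₁ ω) * Y₀ ω) - (A₀ ω * Y₁ ω + (1 - A₀ ω) * Y₀ ω)) ∂μ
      = ∫ ω, (Y₁ ω - Y₀ ω) * (A₁ ω - A₀ ω) ∂μ := by
    congr 1; funext ω; ring
  rw [h1]
  exact hindep.integral_fun_mul_eq_mul_integral (hY₁.sub hY₀).aestronglyMeasurable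
    ((hA₁.sub hA₀).aestronglyMeasurable)
end

section
/- Wald ratio identification of the treatment effect (Equation (3) of the paper, conditional-on-covariates form): suppose (i) Z is independent of the random vector (Y₁, Y₀, A₁, A₀); (ii) Y₁ − Y₀ is independent of A₁ − A₀ (unconfounded compliance); (iii) 0 < μ(Z = 1) < 1; and (iv) relevance: E[A | Z = 1] − E[A | Z = 0] ≠ 0. Then (E[Y | Z = 1] − E[Y | Z = 0]) / (E[A | Z = 1] − E[A | Z = 0]) = ∫ (Y₁ − Y₀) dμ, i.e., the ratio of the intent-to-treat outcome contrast to the compliance contrast equals the average treatment effect. -/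
open MeasureTheory ProbabilityTheory

/-- Integral of a function of an independent vector under conditioning on `{Z = c}`. -/
lemma cond_integral_indep {Ω : Type*} [MeasurableSpace Ω] (μ : Measure Ω)
    [IsProbabilityMeasure μ] (Z : Ω → ℝ) (hZ : Measurable Z)
    (V : Ω → ℝ × ℝ × ℝ × ℝ) (hindep : IndepFun Z V μ) (c : ℝ)
    (f : ℝ × ℝ × ℝ × ℝ → ℝ) (hf : Measurable f) (hint : Integrable (fun ω => f (V ω)) μ)
    (hpos : μ {ω | Z ω = c} ≠ 0) :
    ∫ ω, f (V ω) ∂(μ[|{ω | Z ω = c}]) = ∫ ω, f (V ω) ∂μ := by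
  set s : Set Ω := {ω | Z ω = c} with hs_def
  have hs : MeasurableSet s := hZ (measurableSet_singleton c)
  have hfin : μ s ≠ ⊤ := (measure_lt_top μ s).ne
  set φ : ℝ → ℝ := fun x => if x = c then 1 else 0 with hφ_def
  have hφ : Measurable φ := by
    apply Measurable.ite (measurableSet_singleton c) <;> exact measurable_const
  have hIndep2 : IndepFun (fun ω => φ (Z ω)) (fun ω => f (V ω)) μ :=
    hindep.comp hφ hf
  have hind_eq : ∀ ω, s.indicator (fun ω => f (V ω)) ω = φ (Z ω) * f (V ω) := by
    intro ω
    by_cases h : ω ∈ s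
    · simp [Set.indicator_of_mem h, hφ_def, h.out]
    · have : Z ω ≠ c := h
      simp [Set.indicator_of_notMem h, hφ_def, this]
  have hφint : ∫ ω, φ (Z ω) ∂μ = (μ s).toReal := by
    have : (fun ω => φ (Z ω)) = s.indicator (fun _ => (1 : ℝ)) := by
      funext ω
      by_cases h : ω ∈ s
      · simp [Set.indicator_of_mem h, hφ_def, h.out]
      · have : Z ω ≠ c := h
        simp [Set.indicator_of_notMem h, hφ_def, this]
    rw [this, integral_indicator_const _ hs]; simp [Measure.real]
  have hrestrict : ∫ ω, f (V ω) ∂(μ.restrict s) = (μ s).toReal * ∫ ω, f (V ω) ∂μ := by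
    rw [← integral_indicator hs]
    calc ∫ ω, s.indicator (fun ω => f (V ω)) ω ∂μ
        = ∫ ω, φ (Z ω) * f (V ω) ∂μ := by
          exact integral_congr_ae (Filter.Eventually.of_forall hind_eq)
      _ = (∫ ω, φ (Z ω) ∂μ) * ∫ ω, f (V ω) ∂μ :=
          hIndep2.integral_fun_mul_eq_mul_integral (hφ.comp hZ).aestronglyMeasurable hint.aestronglyMeasurable
      _ = (μ s).toReal * ∫ ω, f (V ω) ∂μ := by rw [hφint]
  rw [ProbabilityTheory.cond, integral_smul_measure, hrestrict, smul_eq_mul, ← mul_assoc,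
    ENNReal.toReal_inv, inv_mul_cancel₀ (by simpa [ENNReal.toReal_eq_zero_iff, hfin] using hpos),
    one_mul]

/-- Wald ratio identification of the treatment effect (Equation (3) of the paper, conditional
on a covariate value): under instrument independence, unconfounded compliance,
`0 < μ(Z = 1) < 1`, and relevance, the ratio of the intent-to-treat outcome contrast to the
compliance contrast equals the average treatment effect `∫ (Y₁ − Y₀) dμ`. -/
theorem wald_ratio_identification
    {Ω : Type*} [MeasurableSpace Ω] (μ : Measure Ω) [IsProbabilityMeasure μ]
    (Z A₁ A₀ Y₁ Y₀ A Y : Ω → ℝ)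
    (hZ : Measurable Z) (hA₁ : Measurable A₁) (hA₀ : Measurable A₀)
    (hZ01 : ∀ ω, Z ω = 0 ∨ Z ω = 1)
    (hA₁01 : ∀ ω, A₁ ω = 0 ∨ A₁ ω = 1) (hA₀01 : ∀ ω, A₀ ω = 0 ∨ A₀ ω = 1)
    (hY₁ : Integrable Y₁ μ) (hY₀ : Integrable Y₀ μ)
    (hA : ∀ ω, A ω = Z ω * A₁ ω + (1 - Z ω) * A₀ ω)
    (hY : ∀ ω, Y ω = A ω * Y₁ ω + (1 - A ω) * Y₀ ω)
    (hindep : IndepFun Z (fun ω => (Y₁ ω, Y₀ ω, A₁ ω, A₀ ω)) μ)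
    (hcompl : IndepFun (fun ω => Y₁ ω - Y₀ ω) (fun ω => A₁ ω - A₀ ω) μ)
    (hpos : 0 < μ {ω | Z ω = 1}) (hlt : μ {ω | Z ω = 1} < 1)
    (hrel : (∫ ω, A ω ∂(μ[|{ω | Z ω = 1}])) - (∫ ω, A ω ∂(μ[|{ω | Z ω = 0}])) ≠ 0) :
    ((∫ ω, Y ω ∂(μ[|{ω | Z ω = 1}])) - (∫ ω, Y ω ∂(μ[|{ω | Z ω = 0}])))
        / ((∫ ω, A ω ∂(μ[|{ω | Z ω = 1}])) - (∫ ω, A ω ∂(μ[|{ω | Z ω = 0}])))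
      = ∫ ω, (Y₁ ω - Y₀ ω) ∂μ := by
  set V : Ω → ℝ × ℝ × ℝ × ℝ := fun ω => (Y₁ ω, Y₀ ω, A₁ ω, A₀ ω) with hV
  -- measures of the conditioning events are nonzero
  have hμ1 : μ {ω | Z ω = 1} ≠ 0 := hpos.ne'
  have hs0eq : {ω | Z ω = 0} = {ω | Z ω = 1}ᶜ := by
    ext ω; rcases hZ01 ω with h | h <;> simp [h]
  have hmeas1 : MeasurableSet {ω | Z ω = 1} := hZ (measurableSet_singleton 1)
  have hμ0 : μ {ω | Z ω = 0} ≠ 0 := by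
    rw [hs0eq]
    intro h
    have h2 := measure_add_measure_compl (μ := μ) hmeas1
    rw [h, add_zero, measure_univ] at h2
    exact hlt.ne h2
  -- a.e. membership in the conditioning event
  have hmem : ∀ c : ℝ, ∀ᵐ ω ∂(μ[|{ω | Z ω = c}]), Z ω = c := by
    intro c
    rw [ProbabilityTheory.cond]
    exact Measure.ae_smul_measure (ae_restrict_mem (hZ (measurableSet_singleton c))) _
  -- integrability facts
  have hbdd : ∀ (B : Ω → ℝ), Measurable B → (∀ ω, B ω = 0 ∨ B ω = 1) → Integrable B μ := by
    intro B hB hB01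
    refine Integrable.mono' (integrable_const 1) hB.aestronglyMeasurable ?_
    filter_upwards with ω
    rcases hB01 ω with h | h <;> simp [h]
  have hA₁int : Integrable A₁ μ := hbdd A₁ hA₁ hA₁01
  have hA₀int : Integrable A₀ μ := hbdd A₀ hA₀ hA₀01
  have hmix : ∀ (B : Ω → ℝ), Measurable B → (∀ ω, B ω = 0 ∨ B ω = 1) →
      Integrable (fun ω => B ω * Y₁ ω + (1 - B ω) * Y₀ ω) μ := by
    intro B hB hB01
    have h1 : Integrable (fun ω => B ω * Y₁ ω) μ := by
      refine hY₁.bdd_mul hB.aestronglyMeasurable (c := 1) (Filter.Eventually.of_forall fun ω => ?_)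
      rcases hB01 ω with h | h <;> simp [h]
    have h2 : Integrable (fun ω => (1 - B ω) * Y₀ ω) μ := by
      refine hY₀.bdd_mul ((measurable_const.sub hB).aestronglyMeasurable) (c := 1) (Filter.Eventually.of_forall fun ω => ?_)
      rcases hB01 ω with h | h <;> simp [h]
    exact h1.add h2
  have hmix₁ := hmix A₁ hA₁ hA₁01
  have hmix₀ := hmix A₀ hA₀ hA₀01
  -- conditional integrals of A
  have hAc : ∀ c : ℝ, (∀ ω, Z ω = c → A ω = (if c = 1 then A₁ else A₀) ω) →
      μ {ω | Z ω = c} ≠ 0 →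
      ∫ ω, A ω ∂(μ[|{ω | Z ω = c}]) = ∫ ω, (if c = 1 then A₁ else A₀) ω ∂μ := by
    intro c hc hne
    have h1 : ∫ ω, A ω ∂(μ[|{ω | Z ω = c}])
        = ∫ ω, (if c = 1 then A₁ else A₀) ω ∂(μ[|{ω | Z ω = c}]) := by
      refine integral_congr_ae ?_
      filter_upwards [hmem c] with ω hω using hc ω hω
    rw [h1]
    by_cases hc1 : c = 1
    · simpa [hc1] using cond_integral_indep μ Z hZ V
        (by exact hindep) c (fun p => p.2.2.1)
        (measurable_fst.comp (measurable_snd.comp measurable_snd)) (by simpa using hA₁int) hne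
    · simpa [hc1] using cond_integral_indep μ Z hZ V
        (by exact hindep) c (fun p => p.2.2.2)
        (measurable_snd.comp (measurable_snd.comp measurable_snd)) (by simpa using hA₀int) hne
  have hA1 : ∫ ω, A ω ∂(μ[|{ω | Z ω = 1}]) = ∫ ω, A₁ ω ∂μ := by
    simpa using hAc 1 (fun ω hω => by simp [hA, hω]) hμ1
  have hA0 : ∫ ω, A ω ∂(μ[|{ω | Z ω = 0}]) = ∫ ω, A₀ ω ∂μ := by
    simpa using hAc 0 (fun ω hω => by simp [hA, hω]) hμ0
  -- conditional integrals of Y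
  have hY1 : ∫ ω, Y ω ∂(μ[|{ω | Z ω = 1}])
      = ∫ ω, (A₁ ω * Y₁ ω + (1 - A₁ ω) * Y₀ ω) ∂μ := by
    have h1 : ∫ ω, Y ω ∂(μ[|{ω | Z ω = 1}])
        = ∫ ω, (fun p : ℝ × ℝ × ℝ × ℝ => p.2.2.1 * p.1 + (1 - p.2.2.1) * p.2.1) (V ω)
            ∂(μ[|{ω | Z ω = 1}]) := by
      refine integral_congr_ae ?_
      filter_upwards [hmem 1] with ω hω
      simp only [hV, hY, hA, hω]; ring
    rw [h1]
    exact cond_integral_indep μ Z hZ V (by exact hindep) 1 _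
      (((measurable_fst.comp (measurable_snd.comp measurable_snd)).mul measurable_fst).add
        ((measurable_const.sub (measurable_fst.comp (measurable_snd.comp measurable_snd))).mul
          (measurable_fst.comp measurable_snd))) (by simpa using hmix₁) hμ1
  have hY0 : ∫ ω, Y ω ∂(μ[|{ω | Z ω = 0}])
      = ∫ ω, (A₀ ω * Y₁ ω + (1 - A₀ ω) * Y₀ ω) ∂μ := by
    have h1 : ∫ ω, Y ω ∂(μ[|{ω | Z ω = 0}])
        = ∫ ω, (fun p : ℝ × ℝ × ℝ × ℝ => p.2.2.2 * p.1 + (1 - p.2.2.2) * p.2.1) (V ω)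
            ∂(μ[|{ω | Z ω = 0}]) := by
      refine integral_congr_ae ?_
      filter_upwards [hmem 0] with ω hω
      simp only [hV, hY, hA, hω]; ring
    rw [h1]
    exact cond_integral_indep μ Z hZ V (by exact hindep) 0 _
      (((measurable_snd.comp (measurable_snd.comp measurable_snd)).mul measurable_fst).add
        ((measurable_const.sub (measurable_snd.comp (measurable_snd.comp measurable_snd))).mul
          (measurable_fst.comp measurable_snd))) (by simpa using hmix₀) hμ0
  -- numerator
  have hnum : (∫ ω, Y ω ∂(μ[|{ω | Z ω = 1}])) - (∫ ω, Y ω ∂(μ[|{ω | Z ω = 0}]))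
      = (∫ ω, (Y₁ ω - Y₀ ω) ∂μ) * ∫ ω, (A₁ ω - A₀ ω) ∂μ := by
    rw [hY1, hY0, ← integral_sub hmix₁ hmix₀]
    have : ∀ ω, (A₁ ω * Y₁ ω + (1 - A₁ ω) * Y₀ ω) - (A₀ ω * Y₁ ω + (1 - A₀ ω) * Y₀ ω)
        = (Y₁ ω - Y₀ ω) * (A₁ ω - A₀ ω) := fun ω => by ring
    rw [integral_congr_ae (Filter.Eventually.of_forall this)]
    exact hcompl.integral_fun_mul_eq_mul_integral (hY₁.sub hY₀).aestronglyMeasurable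
      (hA₁int.sub hA₀int).aestronglyMeasurable
  -- denominator
  have hden : (∫ ω, A ω ∂(μ[|{ω | Z ω = 1}])) - (∫ ω, A ω ∂(μ[|{ω | Z ω = 0}]))
      = ∫ ω, (A₁ ω - A₀ ω) ∂μ := by
    rw [hA1, hA0, ← integral_sub hA₁int hA₀int]
  have hdne : (∫ ω, (A₁ ω - A₀ ω) ∂μ) ≠ 0 := hden ▸ hrel
  rw [hnum, hden, mul_div_cancel_right₀ _ hdne]
end

section
/- Lemma 1 of the paper (CATE estimation with IVs, conditional-on-covariates form with randomized instrument): suppose (i) Z is independent of the random vector (Y₁, Y₀, A₁, A₀); (ii) Y₁ − Y₀ is independent of A₁ − A₀; (iii) π := μ(Z = 1) satisfies 0 < π < 1; and (iv) γ := E[A | Z = 1] − E[A | Z = 0] ≠ 0. Then ∫ ( Y·Z/(π·γ) − Y·(1−Z)/((1−π)·γ) ) dμ = ∫ (Y₁ − Y₀) dμ; i.e., the inverse-propensity, inverse-compliance weighted pseudo-outcome has mean equal to the average treatment effect. -/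
open MeasureTheory ProbabilityTheory

/-- Lemma 1 of the paper (CATE estimation with IVs, conditional on a covariate value,
randomized instrument): the inverse-propensity, inverse-compliance weighted pseudo-outcome
has mean equal to the average treatment effect, where `π := μ(Z = 1)` is the instrument
propensity and `γ := E[A | Z = 1] − E[A | Z = 0]` the compliance factor. -/
theorem weighted_pseudo_outcome_mean_eq_ate
    {Ω : Type*} [MeasurableSpace Ω] (μ : Measure Ω) [IsProbabilityMeasure μ]
    (Z A₁ A₀ Y₁ Y₀ A Y : Ω → ℝ) (π γ : ℝ)
    (hZ : Measurable Z) (hA₁ : Measurable A₁) (hA₀ : Measurable A₀)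
    (hZ01 : ∀ ω, Z ω = 0 ∨ Z ω = 1)
    (hA₁01 : ∀ ω, A₁ ω = 0 ∨ A₁ ω = 1) (hA₀01 : ∀ ω, A₀ ω = 0 ∨ A₀ ω = 1)
    (hY₁ : Integrable Y₁ μ) (hY₀ : Integrable Y₀ μ)
    (hA : ∀ ω, A ω = Z ω * A₁ ω + (1 - Z ω) * A₀ ω)
    (hY : ∀ ω, Y ω = A ω * Y₁ ω + (1 - A ω) * Y₀ ω)
    (hindep : IndepFun Z (fun ω => (Y₁ ω, Y₀ ω, A₁ ω, A₀ ω)) μ)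
    (hcompl : IndepFun (fun ω => Y₁ ω - Y₀ ω) (fun ω => A₁ ω - A₀ ω) μ)
    (hπ : π = (μ {ω | Z ω = 1}).toReal) (hπ0 : 0 < π) (hπ1 : π < 1)
    (hγ : γ = (∫ ω, A ω ∂(μ[|{ω | Z ω = 1}])) - (∫ ω, A ω ∂(μ[|{ω | Z ω = 0}])))
    (hγ0 : γ ≠ 0) :
    ∫ ω, (Y ω * Z ω / (π * γ) - Y ω * (1 - Z ω) / ((1 - π) * γ)) ∂μ
      = ∫ ω, (Y₁ ω - Y₀ ω) ∂μ := by
  -- abbreviations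
  set ΔY : Ω → ℝ := fun ω => Y₁ ω - Y₀ ω with hΔY
  have hΔYint : Integrable ΔY μ := hY₁.sub hY₀
  -- boundedness helpers
  have hZb : ∀ ω, ‖Z ω‖ ≤ 1 := by
    intro ω; rcases hZ01 ω with h | h <;> simp [h]
  have hZ'b : ∀ ω, ‖1 - Z ω‖ ≤ 1 := by
    intro ω; rcases hZ01 ω with h | h <;> simp [h]
  have hA₁b : ∀ ω, ‖A₁ ω‖ ≤ 1 := by
    intro ω; rcases hA₁01 ω with h | h <;> simp [h]
  have hA₀b : ∀ ω, ‖A₀ ω‖ ≤ 1 := by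
    intro ω; rcases hA₀01 ω with h | h <;> simp [h]
  -- f₁, f₀
  set f₁ : Ω → ℝ := fun ω => Y₀ ω + A₁ ω * ΔY ω with hf₁
  set f₀ : Ω → ℝ := fun ω => Y₀ ω + A₀ ω * ΔY ω with hf₀
  have hf₁int : Integrable f₁ μ :=
    hY₀.add (hΔYint.bdd_mul hA₁.aestronglyMeasurable (Filter.Eventually.of_forall hA₁b))
  have hf₀int : Integrable f₀ μ :=
    hY₀.add (hΔYint.bdd_mul hA₀.aestronglyMeasurable (Filter.Eventually.of_forall hA₀b))
  -- measure of sets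
  have hs1 : MeasurableSet {ω | Z ω = 1} := hZ (measurableSet_singleton 1)
  have hs0 : MeasurableSet {ω | Z ω = 0} := hZ (measurableSet_singleton 0)
  have hcompl01 : {ω | Z ω = 0} = {ω | Z ω = 1}ᶜ := by
    ext ω; rcases hZ01 ω with h | h <;> simp [h]
  -- E[Z] = π
  have hEZ : ∫ ω, Z ω ∂μ = π := by
    have : Z = Set.indicator {ω | Z ω = 1} (fun _ => (1:ℝ)) := by
      funext ω; rcases hZ01 ω with h | h <;> simp [Set.indicator, h]
    rw [hπ, this, integral_indicator_const _ hs1]; simp [measureReal_def]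
  have hE1Z : ∫ ω, (1 - Z ω) ∂μ = 1 - π := by
    rw [integral_sub (integrable_const 1)
      ((integrable_const (1:ℝ)).bdd_mul hZ.aestronglyMeasurable (Filter.Eventually.of_forall (by simpa using hZb)) |>.congr (by filter_upwards with ω; ring)), hEZ]
    simp
  have hπ1' : μ {ω | Z ω = 1} ≠ ⊤ := measure_ne_top μ _
  have hμ1 : (μ {ω | Z ω = 1}).toReal = π := hπ.symm
  have hμ0 : (μ {ω | Z ω = 0}).toReal = 1 - π := by
    rw [hcompl01, measure_compl hs1 hπ1', measure_univ,
      ENNReal.toReal_sub_of_le prob_le_one (by norm_num)]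
    simp [hμ1]
  -- independence facts via composition
  have hmul_indep : ∀ (ψ : ℝ × ℝ × ℝ × ℝ → ℝ), Measurable ψ →
      IndepFun Z (fun ω => ψ (Y₁ ω, Y₀ ω, A₁ ω, A₀ ω)) μ :=
    fun ψ hψ => hindep.comp measurable_id hψ
  have hindep₁ : IndepFun Z f₁ μ := by
    have := hmul_indep (fun p => p.2.1 + p.2.2.1 * (p.1 - p.2.1)) (by fun_prop)
    exact this
  have hindep₀ : IndepFun Z f₀ μ := by
    have := hmul_indep (fun p => p.2.1 + p.2.2.2 * (p.1 - p.2.1)) (by fun_prop)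
    exact this
  have hindepA₁ : IndepFun Z A₁ μ := by
    have := hmul_indep (fun p => p.2.2.1) (by fun_prop)
    exact this
  have hindepA₀ : IndepFun Z A₀ μ := by
    have := hmul_indep (fun p => p.2.2.2) (by fun_prop)
    exact this
  have hZaesm : AEStronglyMeasurable Z μ := hZ.aestronglyMeasurable
  -- key integral identities
  have hZA : ∀ ω, Z ω * A ω = Z ω * A₁ ω := by
    intro ω; rcases hZ01 ω with h | h <;> simp [hA, h]
  have hZ'A : ∀ ω, (1 - Z ω) * A ω = (1 - Z ω) * A₀ ω := by
    intro ω; rcases hZ01 ω with h | h <;> simp [hA, h]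
  have hYZ : ∀ ω, Y ω * Z ω = Z ω * f₁ ω := by
    intro ω; rcases hZ01 ω with h | h <;>
      simp only [hY, hA, hf₁, hΔY, h] <;> ring
  have hYZ' : ∀ ω, Y ω * (1 - Z ω) = (1 - Z ω) * f₀ ω := by
    intro ω; rcases hZ01 ω with h | h <;>
      simp only [hY, hA, hf₀, hΔY, h] <;> ring
  -- integrability of Z*f₁ etc.
  have hZf₁int : Integrable (fun ω => Z ω * f₁ ω) μ :=
    hf₁int.bdd_mul hZaesm (Filter.Eventually.of_forall hZb)
  have hZ'f₀int : Integrable (fun ω => (1 - Z ω) * f₀ ω) μ :=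
    hf₀int.bdd_mul (aestronglyMeasurable_const.sub hZaesm) (Filter.Eventually.of_forall hZ'b)
  -- product formulas
  have hEZf₁ : ∫ ω, Z ω * f₁ ω ∂μ = π * ∫ ω, f₁ ω ∂μ := by
    rw [hindep₁.integral_fun_mul_eq_mul_integral hZaesm hf₁int.aestronglyMeasurable, hEZ]
  have hEZ'f₀ : ∫ ω, (1 - Z ω) * f₀ ω ∂μ = (1 - π) * ∫ ω, f₀ ω ∂μ := by
    have hind : IndepFun (fun ω => 1 - Z ω) f₀ μ :=
      hindep₀.comp (measurable_const.sub measurable_id) measurable_id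
    rw [hind.integral_fun_mul_eq_mul_integral (aestronglyMeasurable_const.sub hZaesm)
      hf₀int.aestronglyMeasurable, hE1Z]
  -- compute conditional expectations of A
  have hcondint : ∀ (s : Set Ω), ∫ ω, A ω ∂(μ[|s]) = (μ s).toReal⁻¹ * ∫ ω in s, A ω ∂μ := by
    intro s
    rw [ProbabilityTheory.cond, integral_smul_measure]
    simp [ENNReal.toReal_inv]
  have hA₁int : Integrable A₁ μ :=
    (integrable_const (1:ℝ)).mono' hA₁.aestronglyMeasurable (Filter.Eventually.of_forall hA₁b)
  have hA₀int : Integrable A₀ μ :=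
    (integrable_const (1:ℝ)).mono' hA₀.aestronglyMeasurable (Filter.Eventually.of_forall hA₀b)
  have hset1 : ∫ ω in {ω | Z ω = 1}, A ω ∂μ = π * ∫ ω, A₁ ω ∂μ := by
    have h1 : ∫ ω in {ω | Z ω = 1}, A ω ∂μ = ∫ ω, Z ω * A₁ ω ∂μ := by
      rw [← integral_indicator hs1]
      congr 1; funext ω
      rcases hZ01 ω with h | h <;> simp [Set.indicator, h, hA]
    rw [h1, hindepA₁.integral_fun_mul_eq_mul_integral hZaesm hA₁int.aestronglyMeasurable, hEZ]
  have hset0 : ∫ ω in {ω | Z ω = 0}, A ω ∂μ = (1 - π) * ∫ ω, A₀ ω ∂μ := by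
    have h1 : ∫ ω in {ω | Z ω = 0}, A ω ∂μ = ∫ ω, (1 - Z ω) * A₀ ω ∂μ := by
      rw [← integral_indicator hs0]
      congr 1; funext ω
      rcases hZ01 ω with h | h <;> simp [Set.indicator, h, hA]
    have hind : IndepFun (fun ω => 1 - Z ω) A₀ μ :=
      hindepA₀.comp (measurable_const.sub measurable_id) measurable_id
    rw [h1, hind.integral_fun_mul_eq_mul_integral (aestronglyMeasurable_const.sub hZaesm)
      hA₀int.aestronglyMeasurable, hE1Z]
  have hπne : π ≠ 0 := ne_of_gt hπ0
  have hπ1ne : (1 : ℝ) - π ≠ 0 := sub_ne_zero.mpr (by linarith)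
  have hγval : γ = (∫ ω, A₁ ω ∂μ) - ∫ ω, A₀ ω ∂μ := by
    rw [hγ, hcondint, hcondint, hset1, hset0, hμ1, hμ0]
    field_simp
  -- compliance independence
  have hEdiff : (∫ ω, f₁ ω ∂μ) - ∫ ω, f₀ ω ∂μ = γ * ∫ ω, ΔY ω ∂μ := by
    have h1 : (∫ ω, f₁ ω ∂μ) - ∫ ω, f₀ ω ∂μ = ∫ ω, ΔY ω * (A₁ ω - A₀ ω) ∂μ := by
      rw [← integral_sub hf₁int hf₀int]
      congr 1; funext ω; simp only [hf₁, hf₀]; ring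
    have h2 : IndepFun ΔY (fun ω => A₁ ω - A₀ ω) μ := hcompl
    rw [h1, h2.integral_fun_mul_eq_mul_integral hΔYint.aestronglyMeasurable
      (hA₁.sub hA₀).aestronglyMeasurable,
      integral_sub hA₁int hA₀int, ← hγval, mul_comm]
  -- put it together
  have hint1 : Integrable (fun ω => Y ω * Z ω / (π * γ)) μ := by
    have : (fun ω => Y ω * Z ω / (π * γ)) = fun ω => (π * γ)⁻¹ * (Z ω * f₁ ω) := by
      funext ω; rw [hYZ ω]; ring
    rw [this]; exact hZf₁int.const_mul _
  have hint2 : Integrable (fun ω => Y ω * (1 - Z ω) / ((1 - π) * γ)) μ := by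
    have : (fun ω => Y ω * (1 - Z ω) / ((1 - π) * γ))
        = fun ω => ((1 - π) * γ)⁻¹ * ((1 - Z ω) * f₀ ω) := by
      funext ω; rw [hYZ' ω]; ring
    rw [this]; exact hZ'f₀int.const_mul _
  rw [integral_sub hint1 hint2]
  have e1 : ∫ ω, Y ω * Z ω / (π * γ) ∂μ = (π * γ)⁻¹ * (π * ∫ ω, f₁ ω ∂μ) := by
    rw [← hEZf₁, ← integral_const_mul]
    congr 1; funext ω; rw [hYZ ω]; ring
  have e2 : ∫ ω, Y ω * (1 - Z ω) / ((1 - π) * γ) ∂μ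
      = ((1 - π) * γ)⁻¹ * ((1 - π) * ∫ ω, f₀ ω ∂μ) := by
    rw [← hEZ'f₀, ← integral_const_mul]
    congr 1; funext ω; rw [hYZ' ω]; ring
  rw [e1, e2]
  have : (π * γ)⁻¹ * (π * ∫ ω, f₁ ω ∂μ) - ((1 - π) * γ)⁻¹ * ((1 - π) * ∫ ω, f₀ ω ∂μ)
      = ((∫ ω, f₁ ω ∂μ) - ∫ ω, f₀ ω ∂μ) / γ := by
    field_simp
  rw [this, hEdiff]
  exact mul_div_cancel_left₀ _ hγ0
end

section
/- Bound on the asymptotic bias term λ₃ from representation estimation error (a step in the proof of Theorem 2): let μ be a probability measure, let w : Ω → ℝ be measurable with |w| ≤ B almost everywhere, let φ, φ̂ : Ω → ℝᵈ be measurable with ‖φ̂(ω)‖₂ ≤ B almost everywhere and ‖φ − φ̂‖ in L²(μ), and let ν ∈ ℝᵈ. Assume the d×d matrix M̂ := ∫ w²·φ̂·φ̂ᵀ dμ is invertible. Then ‖ M̂⁻¹·(∫ w²·φ̂·φᵀ dμ)·ν − ν ‖₂ = ‖ M̂⁻¹·∫ w²·φ̂·(φ − φ̂)ᵀ·ν dμ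 ‖₂ ≤ ‖M̂⁻¹‖_op · B³ · ‖ν‖₂ · ‖φ − φ̂‖_{L²(μ)}, where ‖·‖_op is the ℓ²-operator norm on d×d matrices. -/
open MeasureTheory

/-- Bound on the asymptotic bias term `λ₃` from representation estimation error (a step in the
proof of Theorem 2): with `M̂ := ∫ w²·φ̂·φ̂ᵀ dμ` invertible,
`‖M̂⁻¹·(∫ w²·φ̂·φᵀ dμ)·ν − ν‖₂ = ‖M̂⁻¹·∫ w²·φ̂·(φ − φ̂)ᵀ·ν dμ‖₂
  ≤ ‖M̂⁻¹‖_op · B³ · ‖ν‖₂ · ‖φ − φ̂‖_{L²(μ)}`,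
where `‖·‖_op` is the ℓ²-operator norm, Euclidean norms are `‖x‖₂ = (∑ i, x i²)^{1/2}`, and
`‖φ − φ̂‖_{L²(μ)} = (∫ ‖φ(ω) − φ̂(ω)‖₂² dμ)^{1/2}`. -/
theorem lambda3_representation_error_bound
    {Ω : Type*} [MeasurableSpace Ω] (μ : Measure Ω) [IsProbabilityMeasure μ] {d : ℕ}
    (w : Ω → ℝ) (φ φh : Ω → Fin d → ℝ) (ν : Fin d → ℝ) (B : ℝ)
    (hw : Measurable w) (hφ : ∀ i, Measurable fun ω => φ ω i)
    (hφh : ∀ i, Measurable fun ω => φh ω i)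
    (hw_bdd : ∀ᵐ ω ∂μ, |w ω| ≤ B)
    (hφh_bdd : ∀ᵐ ω ∂μ, Real.sqrt (∑ i, (φh ω i) ^ 2) ≤ B)
    (hφL2 : Integrable (fun ω => ∑ i, (φ ω i - φh ω i) ^ 2) μ)
    (Mh : Matrix (Fin d) (Fin d) ℝ)
    (hMh : Mh = Matrix.of fun i j => ∫ ω, (w ω) ^ 2 * φh ω i * φh ω j ∂μ)
    (hinv : IsUnit Mh.det) :
    Real.sqrt (∑ i,
        (Mh⁻¹.mulVec (fun j => ∑ k, (∫ ω, (w ω) ^ 2 * φh ω j * φ ω k ∂μ) * ν k) i - ν i) ^ 2)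
      = Real.sqrt (∑ i,
          (Mh⁻¹.mulVec
            (fun j => ∫ ω, (w ω) ^ 2 * φh ω j * (∑ k, (φ ω k - φh ω k) * ν k) ∂μ) i) ^ 2)
    ∧ Real.sqrt (∑ i,
        (Mh⁻¹.mulVec (fun j => ∑ k, (∫ ω, (w ω) ^ 2 * φh ω j * φ ω k ∂μ) * ν k) i - ν i) ^ 2)
      ≤ ‖Matrix.toEuclideanCLM (𝕜 := ℝ) Mh⁻¹‖ * B ^ 3 * Real.sqrt (∑ i, (ν i) ^ 2)
          * Real.sqrt (∫ ω, ∑ i, (φ ω i - φh ω i) ^ 2 ∂μ) := by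
  classical
  have hB : 0 ≤ B := by
    obtain ⟨ω, h1⟩ := hφh_bdd.exists
    exact le_trans (Real.sqrt_nonneg _) h1
  -- abbreviations
  set g : Ω → ℝ := fun ω => ∑ k, (φ ω k - φh ω k) * ν k with hgdef
  set nδ : Ω → ℝ := fun ω => Real.sqrt (∑ i, (φ ω i - φh ω i) ^ 2) with hnδdef
  set nν : ℝ := Real.sqrt (∑ i, (ν i) ^ 2) with hnνdef
  have hnν : 0 ≤ nν := Real.sqrt_nonneg _
  have hg_meas : Measurable g := by
    apply Finset.measurable_sum
    exact fun k _ => ((hφ k).sub (hφh k)).mul_const _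
  have hnδ_meas : Measurable nδ := by
    apply Measurable.sqrt
    exact Finset.measurable_sum _ fun i _ => ((hφ i).sub (hφh i)).pow_const 2
  have hnδ_sq : ∀ ω, nδ ω ^ 2 = ∑ i, (φ ω i - φh ω i) ^ 2 := fun ω =>
    Real.sq_sqrt (Finset.sum_nonneg fun i _ => sq_nonneg _)
  have hnδ_memℒp : MemLp nδ 2 μ := by
    rw [memLp_two_iff_integrable_sq hnδ_meas.aestronglyMeasurable]
    exact hφL2.congr (by filter_upwards with ω using (hnδ_sq ω).symm)
  have hnδ_int : Integrable nδ μ := hnδ_memℒp.integrable one_le_two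
  have hφh_abs : ∀ᵐ ω ∂μ, ∀ i, |φh ω i| ≤ B := by
    filter_upwards [hφh_bdd] with ω h i
    calc |φh ω i| = Real.sqrt ((φh ω i) ^ 2) := (Real.sqrt_sq_eq_abs _).symm
      _ ≤ Real.sqrt (∑ j, (φh ω j) ^ 2) := by
          apply Real.sqrt_le_sqrt
          exact Finset.single_le_sum (f := fun j => (φh ω j) ^ 2)
            (fun j _ => sq_nonneg _) (Finset.mem_univ i)
      _ ≤ B := h
  have hg_abs : ∀ ω, |g ω| ≤ nδ ω * nν := by
    intro ω
    calc |g ω| = Real.sqrt (g ω ^ 2) := (Real.sqrt_sq_eq_abs _).symm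
      _ ≤ Real.sqrt ((∑ i, (φ ω i - φh ω i) ^ 2) * ∑ i, (ν i) ^ 2) :=
          Real.sqrt_le_sqrt (Finset.sum_mul_sq_le_sq_mul_sq _ _ _)
      _ = nδ ω * nν :=
          Real.sqrt_mul (Finset.sum_nonneg fun i _ => sq_nonneg _) _
  have hg_int : Integrable g μ := by
    refine Integrable.mono' (hnδ_int.mul_const nν) hg_meas.aestronglyMeasurable ?_
    filter_upwards with ω
    simpa [Real.norm_eq_abs] using hg_abs ω
  -- integrability of the matrix-entry integrands
  have hmeas_wjg : ∀ j, Measurable (fun ω => (w ω) ^ 2 * φh ω j * g ω) := fun j =>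
    (((hw.pow_const 2).mul (hφh j)).mul hg_meas)
  have habs_w2 : ∀ᵐ ω ∂μ, (w ω) ^ 2 ≤ B ^ 2 := by
    filter_upwards [hw_bdd] with ω h
    calc (w ω) ^ 2 = |w ω| ^ 2 := (sq_abs _).symm
      _ ≤ B ^ 2 := pow_le_pow_left₀ (abs_nonneg _) h 2
  have hint_g : ∀ j, Integrable (fun ω => (w ω) ^ 2 * φh ω j * g ω) μ := by
    intro j
    refine Integrable.mono' (hg_int.abs.const_mul (B ^ 3))
      (hmeas_wjg j).aestronglyMeasurable ?_
    filter_upwards [habs_w2, hφh_abs] with ω h1 h2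
    have h3 : 0 ≤ (w ω) ^ 2 := sq_nonneg _
    have h4 := abs_nonneg (g ω)
    have h5 := h2 j
    have h6 := abs_nonneg (φh ω j)
    calc ‖(w ω) ^ 2 * φh ω j * g ω‖ = (w ω) ^ 2 * |φh ω j| * |g ω| := by
          simp [Real.norm_eq_abs, abs_mul, abs_of_nonneg h3]
      _ ≤ B ^ 2 * B * |g ω| := by
          apply mul_le_mul_of_nonneg_right _ h4
          exact mul_le_mul h1 h5 h6 (sq_nonneg B)
      _ = B ^ 3 * |g ω| := by ring
  have hδk_int : ∀ k, Integrable (fun ω => φ ω k - φh ω k) μ := by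
    intro k
    have hsq : Integrable (fun ω => (φ ω k - φh ω k) ^ 2) μ := by
      refine Integrable.mono' hφL2
        (((hφ k).sub (hφh k)).pow_const 2).aestronglyMeasurable ?_
      filter_upwards with ω
      rw [Real.norm_eq_abs, abs_of_nonneg (sq_nonneg _)]
      exact Finset.single_le_sum (f := fun i => (φ ω i - φh ω i) ^ 2)
        (fun i _ => sq_nonneg _) (Finset.mem_univ k)
    exact ((memLp_two_iff_integrable_sq
      ((hφ k).sub (hφh k)).aestronglyMeasurable).2 hsq).integrable one_le_two
  have hint_hh : ∀ j k, Integrable (fun ω => (w ω) ^ 2 * φh ω j * φh ω k) μ := by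
    intro j k
    refine Integrable.mono' (integrable_const (B ^ 2 * B * B))
      (((hw.pow_const 2).mul (hφh j)).mul (hφh k)).aestronglyMeasurable ?_
    filter_upwards [habs_w2, hφh_abs] with ω h1 h2
    calc ‖(w ω) ^ 2 * φh ω j * φh ω k‖ = (w ω) ^ 2 * |φh ω j| * |φh ω k| := by
          simp [Real.norm_eq_abs, abs_mul, abs_of_nonneg (sq_nonneg (w ω))]
      _ ≤ B ^ 2 * B * B := by
          apply mul_le_mul (mul_le_mul h1 (h2 j) (abs_nonneg _) (sq_nonneg B)) (h2 k)
            (abs_nonneg _)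
          positivity
  have hint_hδ : ∀ j k, Integrable (fun ω => (w ω) ^ 2 * φh ω j * (φ ω k - φh ω k)) μ := by
    intro j k
    refine Integrable.mono' ((hδk_int k).abs.const_mul (B ^ 3))
      (((hw.pow_const 2).mul (hφh j)).mul ((hφ k).sub (hφh k))).aestronglyMeasurable ?_
    filter_upwards [habs_w2, hφh_abs] with ω h1 h2
    calc ‖(w ω) ^ 2 * φh ω j * (φ ω k - φh ω k)‖
        = (w ω) ^ 2 * |φh ω j| * |φ ω k - φh ω k| := by
          simp [Real.norm_eq_abs, abs_mul, abs_of_nonneg (sq_nonneg (w ω))]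
      _ ≤ B ^ 2 * B * |φ ω k - φh ω k| := by
          apply mul_le_mul_of_nonneg_right _ (abs_nonneg _)
          exact mul_le_mul h1 (h2 j) (abs_nonneg _) (sq_nonneg B)
      _ = B ^ 3 * |φ ω k - φh ω k| := by ring
  have hint_hφ : ∀ j k, Integrable (fun ω => (w ω) ^ 2 * φh ω j * φ ω k) μ := by
    intro j k
    have := (hint_hδ j k).add (hint_hh j k)
    refine this.congr ?_
    filter_upwards with ω
    simp only [Pi.add_apply]
    ring
  -- the key componentwise identity
  have hkey : ∀ j, (∑ k, (∫ ω, (w ω) ^ 2 * φh ω j * φ ω k ∂μ) * ν k)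
      = (∫ ω, (w ω) ^ 2 * φh ω j * g ω ∂μ) + Mh.mulVec ν j := by
    intro j
    have e1 : (∑ k, (∫ ω, (w ω) ^ 2 * φh ω j * φ ω k ∂μ) * ν k)
        = ∫ ω, ∑ k, (w ω) ^ 2 * φh ω j * φ ω k * ν k ∂μ := by
      rw [integral_finset_sum _ (fun k _ => (hint_hφ j k).mul_const (ν k))]
      exact Finset.sum_congr rfl fun k _ => (integral_mul_const _ _).symm
    have e2 : ∀ ω, (∑ k, (w ω) ^ 2 * φh ω j * φ ω k * ν k)
        = (w ω) ^ 2 * φh ω j * g ω + ∑ k, (w ω) ^ 2 * φh ω j * φh ω k * ν k := by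
      intro ω
      rw [hgdef, Finset.mul_sum, ← Finset.sum_add_distrib]
      exact Finset.sum_congr rfl fun k _ => by ring
    rw [e1]
    simp_rw [e2]
    rw [integral_add (hint_g j)
      (integrable_finset_sum _ fun k _ => (hint_hh j k).mul_const (ν k)),
      integral_finset_sum _ (fun k _ => (hint_hh j k).mul_const (ν k))]
    congr 1
    rw [hMh]
    simp only [Matrix.mulVec, dotProduct, Matrix.of_apply]
    exact Finset.sum_congr rfl fun k _ => integral_mul_const _ _
  have hvec : (fun j => ∑ k, (∫ ω, (w ω) ^ 2 * φh ω j * φ ω k ∂μ) * ν k)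
      = (fun j => ∫ ω, (w ω) ^ 2 * φh ω j * g ω ∂μ) + Mh.mulVec ν := by
    funext j; exact hkey j
  have hcomp : ∀ i, Mh⁻¹.mulVec
        (fun j => ∑ k, (∫ ω, (w ω) ^ 2 * φh ω j * φ ω k ∂μ) * ν k) i - ν i
      = Mh⁻¹.mulVec (fun j => ∫ ω, (w ω) ^ 2 * φh ω j * g ω ∂μ) i := by
    intro i
    rw [hvec, Matrix.mulVec_add, Matrix.mulVec_mulVec, Matrix.nonsing_inv_mul _ hinv,
      Matrix.one_mulVec]
    simp
  have heq : Real.sqrt (∑ i,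
        (Mh⁻¹.mulVec (fun j => ∑ k, (∫ ω, (w ω) ^ 2 * φh ω j * φ ω k ∂μ) * ν k) i - ν i) ^ 2)
      = Real.sqrt (∑ i,
          (Mh⁻¹.mulVec (fun j => ∫ ω, (w ω) ^ 2 * φh ω j * g ω ∂μ) i) ^ 2) := by
    congr 1
    exact Finset.sum_congr rfl fun i _ => by rw [hcomp i]
  refine ⟨heq, ?_⟩
  rw [heq]
  -- the vector-valued integrand
  set F : Ω → EuclideanSpace ℝ (Fin d) :=
    fun ω => (WithLp.equiv 2 (Fin d → ℝ)).symm (fun i => (w ω) ^ 2 * φh ω i * g ω) with hFdef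
  have hF_meas : Measurable F := by
    apply (MeasurableEquiv.toLp 2 (Fin d → ℝ)).measurable.comp
    exact measurable_pi_lambda _ fun i => ((hw.pow_const 2).mul (hφh i)).mul hg_meas
  have hF_norm : ∀ ω, ‖F ω‖ = (w ω) ^ 2 * |g ω| * Real.sqrt (∑ i, (φh ω i) ^ 2) := by
    intro ω
    rw [hFdef, EuclideanSpace.norm_eq]
    simp only [WithLp.equiv_symm_apply, WithLp.ofLp_toLp, Real.norm_eq_abs, sq_abs]
    have : (∑ i, ((w ω) ^ 2 * φh ω i * g ω) ^ 2)
        = ((w ω) ^ 2 * |g ω|) ^ 2 * ∑ i, (φh ω i) ^ 2 := by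
      rw [Finset.mul_sum]
      exact Finset.sum_congr rfl fun i _ => by simp only [mul_pow, sq_abs]; ring
    rw [this, Real.sqrt_mul (sq_nonneg _), Real.sqrt_sq (by positivity)]
  have hF_norm_bd : ∀ᵐ ω ∂μ, ‖F ω‖ ≤ B ^ 3 * |g ω| := by
    filter_upwards [habs_w2, hφh_bdd] with ω h1 h2
    rw [hF_norm ω]
    calc (w ω) ^ 2 * |g ω| * Real.sqrt (∑ i, (φh ω i) ^ 2)
        ≤ B ^ 2 * |g ω| * B := by
          apply mul_le_mul (mul_le_mul_of_nonneg_right h1 (abs_nonneg _)) h2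
            (Real.sqrt_nonneg _)
          positivity
      _ = B ^ 3 * |g ω| := by ring
  have hF_int : Integrable F μ := by
    refine Integrable.mono' (hg_int.abs.const_mul (B ^ 3))
      hF_meas.aestronglyMeasurable hF_norm_bd
  have hproj : ∀ j, (∫ ω, F ω ∂μ) j = ∫ ω, (w ω) ^ 2 * φh ω j * g ω ∂μ := by
    intro j
    have := (EuclideanSpace.proj (𝕜 := ℝ) j).integral_comp_comm hF_int
    simpa [hFdef] using this.symm
  -- identify the LHS with a norm in Euclidean space
  have hnorm_eq : Real.sqrt (∑ i,
        (Mh⁻¹.mulVec (fun j => ∫ ω, (w ω) ^ 2 * φh ω j * g ω ∂μ) i) ^ 2)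
      = ‖Matrix.toEuclideanCLM (𝕜 := ℝ) Mh⁻¹ (∫ ω, F ω ∂μ)‖ := by
    have hVV : (∫ ω, F ω ∂μ)
        = (WithLp.equiv 2 (Fin d → ℝ)).symm (fun j => ∫ ω, (w ω) ^ 2 * φh ω j * g ω ∂μ) := by
      ext j
      rw [hproj j]
      rfl
    rw [hVV, WithLp.equiv_symm_apply, Matrix.toEuclideanCLM_toLp, EuclideanSpace.norm_eq]
    simp only [WithLp.ofLp_toLp, Real.norm_eq_abs, sq_abs, Matrix.toLin'_apply]
  rw [hnorm_eq]
  -- Jensen / Cauchy-Schwarz for the integral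
  have hint_abs_g : ∫ ω, |g ω| ∂μ ≤ nν * Real.sqrt (∫ ω, ∑ i, (φ ω i - φh ω i) ^ 2 ∂μ) := by
    have h1 : ∫ ω, |g ω| ∂μ ≤ ∫ ω, nδ ω * nν ∂μ :=
      integral_mono hg_int.abs (hnδ_int.mul_const nν) hg_abs
    have h2 : ∫ ω, nδ ω * nν ∂μ = (∫ ω, nδ ω ∂μ) * nν := integral_mul_const _ _
    have hpq : (2 : ℝ).HolderConjugate 2 := Real.HolderConjugate.two_two
    have hof2 : ENNReal.ofReal (2 : ℝ) = 2 := by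
      rw [ENNReal.ofReal_ofNat]
    have h3 : ∫ ω, nδ ω ∂μ ≤ Real.sqrt (∫ ω, ∑ i, (φ ω i - φh ω i) ^ 2 ∂μ) := by
      have := integral_mul_le_Lp_mul_Lq_of_nonneg hpq
        (f := nδ) (g := fun _ => (1 : ℝ))
        (Filter.Eventually.of_forall fun ω => Real.sqrt_nonneg _)
        (Filter.Eventually.of_forall fun ω => zero_le_one)
        (by rw [hof2]; exact hnδ_memℒp)
        (by rw [hof2]; exact memLp_const 1)
      simp only [mul_one, Real.one_rpow] at this
      have hrw : ∀ x : ℝ, x ^ (2 : ℝ) = x ^ 2 := fun x => by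
        rw [show (2:ℝ) = ((2:ℕ):ℝ) by norm_num, Real.rpow_natCast]
      simp only [hrw] at this
      rw [integral_const, probReal_univ, smul_eq_mul, mul_one,
        Real.one_rpow, mul_one] at this
      calc ∫ ω, nδ ω ∂μ ≤ (∫ ω, nδ ω ^ 2 ∂μ) ^ (1 / (2:ℝ)) := this
        _ = Real.sqrt (∫ ω, nδ ω ^ 2 ∂μ) := by
            rw [Real.sqrt_eq_rpow]
        _ = Real.sqrt (∫ ω, ∑ i, (φ ω i - φh ω i) ^ 2 ∂μ) := by
            congr 1
            exact integral_congr_ae (Filter.Eventually.of_forall fun ω => hnδ_sq ω)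
    calc ∫ ω, |g ω| ∂μ ≤ (∫ ω, nδ ω ∂μ) * nν := h2 ▸ h1
      _ ≤ Real.sqrt (∫ ω, ∑ i, (φ ω i - φh ω i) ^ 2 ∂μ) * nν := by
          apply mul_le_mul_of_nonneg_right h3 hnν
      _ = nν * Real.sqrt (∫ ω, ∑ i, (φ ω i - φh ω i) ^ 2 ∂μ) := mul_comm _ _
  -- put everything together
  calc ‖Matrix.toEuclideanCLM (𝕜 := ℝ) Mh⁻¹ (∫ ω, F ω ∂μ)‖
      ≤ ‖Matrix.toEuclideanCLM (𝕜 := ℝ) Mh⁻¹‖ * ‖∫ ω, F ω ∂μ‖ :=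
        ContinuousLinearMap.le_opNorm _ _
    _ ≤ ‖Matrix.toEuclideanCLM (𝕜 := ℝ) Mh⁻¹‖
          * (B ^ 3 * (nν * Real.sqrt (∫ ω, ∑ i, (φ ω i - φh ω i) ^ 2 ∂μ))) := by
        apply mul_le_mul_of_nonneg_left _ (norm_nonneg _)
        calc ‖∫ ω, F ω ∂μ‖ ≤ ∫ ω, ‖F ω‖ ∂μ := norm_integral_le_integral_norm _
          _ ≤ ∫ ω, B ^ 3 * |g ω| ∂μ :=
              integral_mono_ae hF_int.norm (hg_int.abs.const_mul _) hF_norm_bd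
          _ = B ^ 3 * ∫ ω, |g ω| ∂μ := integral_const_mul _ _
          _ ≤ B ^ 3 * (nν * Real.sqrt (∫ ω, ∑ i, (φ ω i - φh ω i) ^ 2 ∂μ)) := by
              apply mul_le_mul_of_nonneg_left hint_abs_g (by positivity)
    _ = ‖Matrix.toEuclideanCLM (𝕜 := ℝ) Mh⁻¹‖ * B ^ 3 * nν
          * Real.sqrt (∫ ω, ∑ i, (φ ω i - φh ω i) ^ 2 ∂μ) := by ring
end

section
/- Stability of the population least-squares coefficient under representation error (used to bound ‖hᴼ − ĥᴼ‖ in the proof of Theorem 2): let μ be a probability measure, let φ, φ̂ : Ω → ℝᵈ be measurable with ‖φ(ω)‖₂ ≤ B and ‖φ̂(ω)‖₂ ≤ B almost everywhere and ‖φ − φ̂‖ in L²(μ), and let Ỹ : Ω → ℝ be measurable with |Ỹ| ≤ B almost everywhere. Assume Σ := ∫ φ·φᵀ dμ and Σ̂ := ∫ φ̂·φ̂ᵀ dμ are invertible with ‖Σ⁻¹‖_op ≤ c and ‖Σ̂⁻¹‖_op ≤ c. Then ‖ Σ⁻¹·∫ Ỹ·φ dμ − Σ̂⁻¹·∫ Ỹ·φ̂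 dμ ‖₂ ≤ (2·c²·B³ + c·B)·‖φ − φ̂‖_{L²(μ)}. -/
open MeasureTheory RealInnerProductSpace

section Aux

variable {Ω : Type*} [MeasurableSpace Ω] {μ : Measure Ω} [IsProbabilityMeasure μ] {d : ℕ}

lemma aux_integrable_of_bdd {f : Ω → ℝ} (hm : Measurable f) {C : ℝ}
    (hb : ∀ᵐ ω ∂μ, |f ω| ≤ C) : Integrable f μ :=
  (integrable_const C).mono' hm.aestronglyMeasurable (by simpa [Real.norm_eq_abs] using hb)

lemma aux_comp_bound (x : Fin d → ℝ) (i : Fin d) : |x i| ≤ Real.sqrt (∑ j, x j ^ 2) := by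
  rw [← Real.sqrt_sq_eq_abs]
  exact Real.sqrt_le_sqrt (Finset.single_le_sum (fun j _ => sq_nonneg (x j)) (Finset.mem_univ i))

lemma aux_norm_eq (x : EuclideanSpace ℝ (Fin d)) : ‖x‖ = Real.sqrt (∑ i, (x i) ^ 2) := by
  rw [EuclideanSpace.norm_eq]; simp [sq_abs]

/-- Cauchy–Schwarz / Jensen: `∫ f ≤ √(∫ f²)` on a probability space for nonneg `f`. -/
lemma aux_l1_le_l2 {f : Ω → ℝ} (hf : Integrable f μ)
    (hf2 : Integrable (fun ω => f ω ^ 2) μ) (hpos : ∀ ω, 0 ≤ f ω) :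
    ∫ ω, f ω ∂μ ≤ Real.sqrt (∫ ω, f ω ^ 2 ∂μ) := by
  set a := ∫ ω, f ω ∂μ with ha
  have ha0 : 0 ≤ a := integral_nonneg hpos
  have h0 : 0 ≤ ∫ ω, (f ω - a) ^ 2 ∂μ := integral_nonneg fun ω => sq_nonneg _
  have hint1 : Integrable (fun ω => f ω ^ 2 - 2 * a * f ω) μ := hf2.sub (hf.const_mul (2 * a))
  have hexp : ∫ ω, (f ω - a) ^ 2 ∂μ = (∫ ω, f ω ^ 2 ∂μ) - a ^ 2 := by
    have h1 : ∀ ω, (f ω - a) ^ 2 = (f ω ^ 2 - 2 * a * f ω) + a ^ 2 := by intro ω; ring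
    simp_rw [h1]
    rw [integral_add hint1 (integrable_const _),
      integral_sub hf2 (hf.const_mul (2 * a)), integral_const_mul, integral_const]
    simp [← ha]
    ring
  have hsq : a ^ 2 ≤ ∫ ω, f ω ^ 2 ∂μ := by linarith
  exact (Real.le_sqrt ha0 (le_trans (sq_nonneg a) hsq)).mpr hsq

lemma aux_integral_comp {F : Ω → EuclideanSpace ℝ (Fin d)} (hF : Integrable F μ) (i : Fin d) :
    (∫ ω, F ω ∂μ) i = ∫ ω, F ω i ∂μ := by
  have := (EuclideanSpace.proj i (𝕜 := ℝ)).integral_comp_comm hF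
  simpa using this.symm

end Aux

set_option maxHeartbeats 2000000 in
/-- Stability of the population least-squares coefficient under representation error (used to
bound `‖hᴼ − ĥᴼ‖` in the proof of Theorem 2): if `Σ := ∫ φ·φᵀ dμ` and `Σ̂ := ∫ φ̂·φ̂ᵀ dμ` are
invertible with `‖Σ⁻¹‖_op ≤ c` and `‖Σ̂⁻¹‖_op ≤ c`, then
`‖Σ⁻¹·∫ Ỹ·φ dμ − Σ̂⁻¹·∫ Ỹ·φ̂ dμ‖₂ ≤ (2·c²·B³ + c·B)·‖φ − φ̂‖_{L²(μ)}`,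
with Euclidean norms `‖x‖₂ = (∑ i, x i²)^{1/2}`, ℓ²-operator norms on matrices, and
`‖φ − φ̂‖_{L²(μ)} = (∫ ‖φ(ω) − φ̂(ω)‖₂² dμ)^{1/2}`. -/
theorem population_least_squares_stability
    {Ω : Type*} [MeasurableSpace Ω] (μ : Measure Ω) [IsProbabilityMeasure μ] {d : ℕ}
    (φ φh : Ω → Fin d → ℝ) (Yt : Ω → ℝ) (B c : ℝ)
    (hφ : ∀ i, Measurable fun ω => φ ω i) (hφh : ∀ i, Measurable fun ω => φh ω i)
    (hYt : Measurable Yt)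
    (hφ_bdd : ∀ᵐ ω ∂μ, Real.sqrt (∑ i, (φ ω i) ^ 2) ≤ B)
    (hφh_bdd : ∀ᵐ ω ∂μ, Real.sqrt (∑ i, (φh ω i) ^ 2) ≤ B)
    (hYt_bdd : ∀ᵐ ω ∂μ, |Yt ω| ≤ B)
    (hφL2 : Integrable (fun ω => ∑ i, (φ ω i - φh ω i) ^ 2) μ)
    (Sm Smh : Matrix (Fin d) (Fin d) ℝ)
    (hS : Sm = Matrix.of fun i j => ∫ ω, φ ω i * φ ω j ∂μ)
    (hSh : Smh = Matrix.of fun i j => ∫ ω, φh ω i * φh ω j ∂μ)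
    (hSinv : IsUnit Sm.det) (hShinv : IsUnit Smh.det)
    (hSop : ‖Matrix.toEuclideanCLM (𝕜 := ℝ) Sm⁻¹‖ ≤ c)
    (hShop : ‖Matrix.toEuclideanCLM (𝕜 := ℝ) Smh⁻¹‖ ≤ c) :
    Real.sqrt (∑ i,
        (Sm⁻¹.mulVec (fun j => ∫ ω, Yt ω * φ ω j ∂μ) i
          - Smh⁻¹.mulVec (fun j => ∫ ω, Yt ω * φh ω j ∂μ) i) ^ 2)
      ≤ (2 * c ^ 2 * B ^ 3 + c * B) * Real.sqrt (∫ ω, ∑ i, (φ ω i - φh ω i) ^ 2 ∂μ) := by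
  classical
  have hμ : (μ Set.univ).toReal = 1 := by simp
  have hc : 0 ≤ c := le_trans (norm_nonneg _) hSop
  have hB : 0 ≤ B := by
    have : (ae μ).NeBot := ae_neBot.mpr (IsProbabilityMeasure.ne_zero μ)
    obtain ⟨ω, hω⟩ := hYt_bdd.exists
    exact le_trans (abs_nonneg _) hω
  set e : (Fin d → ℝ) → EuclideanSpace ℝ (Fin d) := fun x => (WithLp.equiv 2 (Fin d → ℝ)).symm x
    with he
  set v : Fin d → ℝ := fun j => ∫ ω, Yt ω * φ ω j ∂μ with hv
  set vh : Fin d → ℝ := fun j => ∫ ω, Yt ω * φh ω j ∂μ with hvh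
  set u : Fin d → ℝ := Smh⁻¹.mulVec vh with hudef
  set U : EuclideanSpace ℝ (Fin d) := e u with hU
  set Φ : Ω → EuclideanSpace ℝ (Fin d) := fun ω => e (φ ω) with hΦ
  set Φh : Ω → EuclideanSpace ℝ (Fin d) := fun ω => e (φh ω) with hΦh
  set Δ : Ω → EuclideanSpace ℝ (Fin d) := fun ω => e (fun i => φ ω i - φh ω i) with hΔ
  set W : Ω → EuclideanSpace ℝ (Fin d) :=
    fun ω => (Yt ω - ⟪Φh ω, U⟫) • Δ ω - ⟪Δ ω, U⟫ • Φ ω with hW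
  set ε : ℝ := Real.sqrt (∫ ω, ∑ i, (φ ω i - φh ω i) ^ 2 ∂μ) with hε
  have hε0 : 0 ≤ ε := Real.sqrt_nonneg _
  have hnΦ : ∀ ω, ‖Φ ω‖ = Real.sqrt (∑ i, (φ ω i) ^ 2) := fun ω => aux_norm_eq _
  have hnΦh : ∀ ω, ‖Φh ω‖ = Real.sqrt (∑ i, (φh ω i) ^ 2) := fun ω => aux_norm_eq _
  have hnΔ : ∀ ω, ‖Δ ω‖ = Real.sqrt (∑ i, (φ ω i - φh ω i) ^ 2) := fun ω => aux_norm_eq _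
  have hinner : ∀ (x : EuclideanSpace ℝ (Fin d)) (y : Fin d → ℝ),
      ⟪x, e y⟫ = ∑ i, x i * y i := fun x y => by
    simp only [PiLp.inner_apply, RCLike.inner_apply, mul_comm]
    rfl
  have hinner1 : ∀ ω, ⟪Φh ω, U⟫ = ∑ j, φh ω j * u j := fun ω => hinner (Φh ω) u
  have hinner2 : ∀ ω, ⟪Δ ω, U⟫ = ∑ j, (φ ω j - φh ω j) * u j := fun ω => hinner (Δ ω) u
  -- measurability
  have hΦm : Measurable Φ := (WithLp.measurable_toLp 2 (Fin d → ℝ)).comp (measurable_pi_lambda _ hφ)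
  have hΦhm : Measurable Φh := (WithLp.measurable_toLp 2 (Fin d → ℝ)).comp (measurable_pi_lambda _ hφh)
  have hΔm : Measurable Δ := (WithLp.measurable_toLp 2 (Fin d → ℝ)).comp (measurable_pi_lambda _ (fun i => (hφ i).sub (hφh i)))
  have hin1m : Measurable fun ω => ⟪Φh ω, U⟫ := by
    simp_rw [hinner1]
    exact Finset.measurable_sum _ fun j _ => (hφh j).mul_const _
  have hin2m : Measurable fun ω => ⟪Δ ω, U⟫ := by
    simp_rw [hinner2]
    exact Finset.measurable_sum _ fun j _ => ((hφ j).sub (hφh j)).mul_const _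
  have hWcomp : ∀ ω i, W ω i
      = (Yt ω - ⟪Φh ω, U⟫) * (φ ω i - φh ω i) - ⟪Δ ω, U⟫ * φ ω i := fun ω i => rfl
  have hWm : Measurable W := by
    refine (WithLp.measurable_toLp 2 (Fin d → ℝ)).comp (f := fun ω => (W ω).ofLp) (measurable_pi_lambda _ ?_)
    intro i
    simp_rw [hWcomp]
    exact ((hYt.sub hin1m).mul ((hφ i).sub (hφh i))).sub (hin2m.mul (hφ i))
  -- a.e. bounds
  have hnΦ_bdd : ∀ᵐ ω ∂μ, ‖Φ ω‖ ≤ B := by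
    filter_upwards [hφ_bdd] with ω h using by rw [hnΦ]; exact h
  have hnΦh_bdd : ∀ᵐ ω ∂μ, ‖Φh ω‖ ≤ B := by
    filter_upwards [hφh_bdd] with ω h using by rw [hnΦh]; exact h
  -- pointwise a.e. bound on W
  have hWbound : ∀ᵐ ω ∂μ, ‖W ω‖ ≤ (B + 2 * B * ‖U‖) * ‖Δ ω‖ := by
    filter_upwards [hnΦ_bdd, hnΦh_bdd, hYt_bdd] with ω h1 h2 h3
    have hb1 : |⟪Φh ω, U⟫| ≤ ‖Φh ω‖ * ‖U‖ := abs_real_inner_le_norm _ _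
    have hb2 : |⟪Δ ω, U⟫| ≤ ‖Δ ω‖ * ‖U‖ := abs_real_inner_le_norm _ _
    have hW1 : ‖W ω‖ ≤ |Yt ω - ⟪Φh ω, U⟫| * ‖Δ ω‖ + |⟪Δ ω, U⟫| * ‖Φ ω‖ := by
      calc ‖W ω‖ ≤ ‖(Yt ω - ⟪Φh ω, U⟫) • Δ ω‖ + ‖⟪Δ ω, U⟫ • Φ ω‖ := norm_sub_le _ _
        _ = |Yt ω - ⟪Φh ω, U⟫| * ‖Δ ω‖ + |⟪Δ ω, U⟫| * ‖Φ ω‖ := by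
            rw [norm_smul, norm_smul, Real.norm_eq_abs, Real.norm_eq_abs]
    have habs : |Yt ω - ⟪Φh ω, U⟫| ≤ B + B * ‖U‖ := by
      calc |Yt ω - ⟪Φh ω, U⟫| ≤ |Yt ω| + |⟪Φh ω, U⟫| := abs_sub _ _
        _ ≤ B + B * ‖U‖ :=
            add_le_add h3 (le_trans hb1 (mul_le_mul_of_nonneg_right h2 (norm_nonneg _)))
    have hU0 : 0 ≤ ‖U‖ := norm_nonneg _
    have hΔ0 : 0 ≤ ‖Δ ω‖ := norm_nonneg _
    have hΦ0 : 0 ≤ ‖Φ ω‖ := norm_nonneg _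
    have e1 : |Yt ω - ⟪Φh ω, U⟫| * ‖Δ ω‖ ≤ (B + B * ‖U‖) * ‖Δ ω‖ :=
      mul_le_mul_of_nonneg_right habs hΔ0
    have e2 : |⟪Δ ω, U⟫| * ‖Φ ω‖ ≤ (‖Δ ω‖ * ‖U‖) * B := by
      refine le_trans (mul_le_mul_of_nonneg_right hb2 hΦ0) ?_
      exact mul_le_mul_of_nonneg_left h1 (by positivity)
    nlinarith [hW1]
  -- integrability of ‖Δ‖ and the L¹–L² bound
  have hΔnorm_meas : Measurable fun ω => ‖Δ ω‖ := hΔm.norm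
  have hΔnorm_int : Integrable (fun ω => ‖Δ ω‖) μ := by
    refine ((integrable_const (1:ℝ)).add hφL2).div_const 2 |>.mono'
      hΔnorm_meas.aestronglyMeasurable ?_
    filter_upwards with ω
    simp only [Pi.add_apply]
    have h0 : (0:ℝ) ≤ ∑ i, (φ ω i - φh ω i) ^ 2 := Finset.sum_nonneg fun i _ => sq_nonneg _
    rw [Real.norm_eq_abs, abs_of_nonneg (norm_nonneg _), hnΔ]
    nlinarith [Real.sq_sqrt h0, Real.sqrt_nonneg (∑ i, (φ ω i - φh ω i) ^ 2),
      sq_nonneg (Real.sqrt (∑ i, (φ ω i - φh ω i) ^ 2) - 1)]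
  have hΔsq : ∀ ω, ‖Δ ω‖ ^ 2 = ∑ i, (φ ω i - φh ω i) ^ 2 := fun ω => by
    rw [hnΔ]; exact Real.sq_sqrt (Finset.sum_nonneg fun i _ => sq_nonneg _)
  have hΔl1 : ∫ ω, ‖Δ ω‖ ∂μ ≤ ε := by
    have h2 : Integrable (fun ω => ‖Δ ω‖ ^ 2) μ := by
      simp_rw [hΔsq]; exact hφL2
    have h3 := aux_l1_le_l2 hΔnorm_int h2 (fun ω => norm_nonneg _)
    rwa [show (∫ ω, ‖Δ ω‖ ^ 2 ∂μ) = ∫ ω, ∑ i, (φ ω i - φh ω i) ^ 2 ∂μ from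
      integral_congr_ae (Filter.Eventually.of_forall fun ω => hΔsq ω)] at h3
  have hΔl1_0 : 0 ≤ ∫ ω, ‖Δ ω‖ ∂μ := integral_nonneg fun ω => norm_nonneg _
  -- integrability of W
  have hWint : Integrable W μ := by
    refine (hΔnorm_int.const_mul (B + 2 * B * ‖U‖)).mono' hWm.aestronglyMeasurable ?_
    filter_upwards [hWbound] with ω h using h
  -- componentwise a.e. bounds
  have hcomp_bdd : ∀ᵐ ω ∂μ, ∀ i, |φ ω i| ≤ B ∧ |φh ω i| ≤ B := by
    filter_upwards [hφ_bdd, hφh_bdd] with ω h1 h2 i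
    exact ⟨le_trans (aux_comp_bound _ i) h1, le_trans (aux_comp_bound _ i) h2⟩
  -- ‖U‖ ≤ c B²
  have hVh_int : Integrable (fun ω => Yt ω • Φh ω) μ := by
    refine (integrable_const (B * B)).mono' (hYt.smul hΦhm).aestronglyMeasurable ?_
    filter_upwards [hYt_bdd, hnΦh_bdd] with ω h1 h2
    rw [norm_smul, Real.norm_eq_abs]
    exact mul_le_mul h1 h2 (norm_nonneg _) hB
  have hevh : e vh = ∫ ω, Yt ω • Φh ω ∂μ := by
    ext i
    rw [aux_integral_comp hVh_int i]
    rfl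
  have hnormvh : ‖e vh‖ ≤ B ^ 2 := by
    rw [hevh]
    calc ‖∫ ω, Yt ω • Φh ω ∂μ‖ ≤ ∫ ω, ‖Yt ω • Φh ω‖ ∂μ := norm_integral_le_integral_norm _
      _ ≤ ∫ _ω, (B * B) ∂μ := by
          refine integral_mono_ae hVh_int.norm (integrable_const _) ?_
          filter_upwards [hYt_bdd, hnΦh_bdd] with ω h1 h2
          rw [norm_smul, Real.norm_eq_abs]
          exact mul_le_mul h1 h2 (norm_nonneg _) hB
      _ = B ^ 2 := by rw [integral_const]; simp [hμ]; ring
  have hclm : ∀ (A : Matrix (Fin d) (Fin d) ℝ) (x : Fin d → ℝ),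
      Matrix.toEuclideanCLM (𝕜 := ℝ) A (e x) = e (A.mulVec x) := fun A x => by
    simp [he, Matrix.toLin'_apply]
  have hUeq : U = Matrix.toEuclideanCLM (𝕜 := ℝ) Smh⁻¹ (e vh) := by
    rw [hU, hudef, hclm]
  have hnormU : ‖U‖ ≤ c * B ^ 2 := by
    rw [hUeq]
    calc ‖Matrix.toEuclideanCLM (𝕜 := ℝ) Smh⁻¹ (e vh)‖
        ≤ ‖Matrix.toEuclideanCLM (𝕜 := ℝ) Smh⁻¹‖ * ‖e vh‖ :=
          ContinuousLinearMap.le_opNorm _ _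
      _ ≤ c * B ^ 2 := mul_le_mul hShop hnormvh (norm_nonneg _) hc
  -- claim A : integral of W componentwise
  set z : Fin d → ℝ := fun i => ∫ ω, W ω i ∂μ with hz
  have hprod_bdd : ∀ a b : ℝ, |a| ≤ B → |b| ≤ B → ∀ t : ℝ, |a * b * t| ≤ B * B * |t| := by
    intro a b h1 h2 t
    rw [abs_mul, abs_mul]
    exact mul_le_mul (mul_le_mul h1 h2 (abs_nonneg _) hB) le_rfl (abs_nonneg _) (by positivity)
  have hzA : z = (v - vh) + ((Smh - Sm).mulVec u) := by
    funext i
    have hWi : ∀ ω, W ω i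
        = Yt ω * φ ω i - Yt ω * φh ω i
          + (∑ j, φh ω i * φh ω j * u j) - (∑ j, φ ω i * φ ω j * u j) := by
      intro ω
      rw [hWcomp, hinner1, hinner2]
      have hm1 : ∑ j, φh ω i * φh ω j * u j = φh ω i * ∑ j, φh ω j * u j := by
        rw [Finset.mul_sum]; simp_rw [mul_assoc]
      have hm2 : ∑ j, φ ω i * φ ω j * u j = φ ω i * ∑ j, φ ω j * u j := by
        rw [Finset.mul_sum]; simp_rw [mul_assoc]
      have hm3 : ∑ j, (φ ω j - φh ω j) * u j
          = (∑ j, φ ω j * u j) - ∑ j, φh ω j * u j := by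
        rw [← Finset.sum_sub_distrib]; congr 1; funext j; ring
      rw [hm1, hm2, hm3]; ring
    have hint1 : Integrable (fun ω => Yt ω * φ ω i) μ := by
      refine aux_integrable_of_bdd (C := B * B) (hYt.mul (hφ i)) ?_
      filter_upwards [hYt_bdd, hcomp_bdd] with ω h1 h2
      rw [abs_mul]
      exact mul_le_mul h1 (h2 i).1 (abs_nonneg _) hB
    have hint2 : Integrable (fun ω => Yt ω * φh ω i) μ := by
      refine aux_integrable_of_bdd (C := B * B) (hYt.mul (hφh i)) ?_
      filter_upwards [hYt_bdd, hcomp_bdd] with ω h1 h2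
      rw [abs_mul]
      exact mul_le_mul h1 (h2 i).2 (abs_nonneg _) hB
    have hint3j : ∀ j, Integrable (fun ω => φh ω i * φh ω j * u j) μ := by
      intro j
      refine aux_integrable_of_bdd (C := B * B * |u j|) (((hφh i).mul (hφh j)).mul_const _) ?_
      filter_upwards [hcomp_bdd] with ω h2
      exact hprod_bdd _ _ (h2 i).2 (h2 j).2 _
    have hint4j : ∀ j, Integrable (fun ω => φ ω i * φ ω j * u j) μ := by
      intro j
      refine aux_integrable_of_bdd (C := B * B * |u j|) (((hφ i).mul (hφ j)).mul_const _) ?_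
      filter_upwards [hcomp_bdd] with ω h2
      exact hprod_bdd _ _ (h2 i).1 (h2 j).1 _
    have hint3 : Integrable (fun ω => ∑ j, φh ω i * φh ω j * u j) μ :=
      integrable_finset_sum _ fun j _ => hint3j j
    have hint4 : Integrable (fun ω => ∑ j, φ ω i * φ ω j * u j) μ :=
      integrable_finset_sum _ fun j _ => hint4j j
    have hsplit : z i = (∫ ω, Yt ω * φ ω i ∂μ) - (∫ ω, Yt ω * φh ω i ∂μ)
        + (∫ ω, ∑ j, φh ω i * φh ω j * u j ∂μ) - ∫ ω, ∑ j, φ ω i * φ ω j * u j ∂μ := by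
      have : z i = ∫ ω, (Yt ω * φ ω i - Yt ω * φh ω i
          + (∑ j, φh ω i * φh ω j * u j) - (∑ j, φ ω i * φ ω j * u j)) ∂μ := by
        rw [hz]
        exact integral_congr_ae (Filter.Eventually.of_forall fun ω => hWi ω)
      have hA2 : Integrable (fun ω => Yt ω * φ ω i - Yt ω * φh ω i) μ := hint1.sub hint2
      have hA : Integrable (fun ω => Yt ω * φ ω i - Yt ω * φh ω i
          + ∑ j, φh ω i * φh ω j * u j) μ := hA2.add hint3
      rw [this, integral_sub hA hint4, integral_add hA2 hint3, integral_sub hint1 hint2]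
    have hi3 : (∫ ω, ∑ j, φh ω i * φh ω j * u j ∂μ)
        = ∑ j, (∫ ω, φh ω i * φh ω j ∂μ) * u j := by
      rw [integral_finset_sum _ fun j _ => hint3j j]
      exact Finset.sum_congr rfl fun j _ => integral_mul_const _ _
    have hi4 : (∫ ω, ∑ j, φ ω i * φ ω j * u j ∂μ)
        = ∑ j, (∫ ω, φ ω i * φ ω j ∂μ) * u j := by
      rw [integral_finset_sum _ fun j _ => hint4j j]
      exact Finset.sum_congr rfl fun j _ => integral_mul_const _ _
    have hRHS : ((v - vh) + ((Smh - Sm).mulVec u)) i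
        = v i - vh i + ((∑ j, (∫ ω, φh ω i * φh ω j ∂μ) * u j)
            - ∑ j, (∫ ω, φ ω i * φ ω j ∂μ) * u j) := by
      simp only [Pi.add_apply, Pi.sub_apply]
      congr 1
      rw [Matrix.sub_mulVec]
      simp only [Pi.sub_apply]
      congr 1
      · simp [Matrix.mulVec, dotProduct, hSh]
      · simp [Matrix.mulVec, dotProduct, hS]
    rw [hsplit, hi3, hi4, hRHS, hv, hvh]
    ring
  -- matrix algebra
  have hSmh_u : Smh.mulVec u = vh := by
    rw [hudef, Matrix.mulVec_mulVec, Matrix.mul_nonsing_inv _ hShinv, Matrix.one_mulVec]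
  have hSm_u : Sm⁻¹.mulVec (Sm.mulVec u) = u := by
    rw [Matrix.mulVec_mulVec, Matrix.nonsing_inv_mul _ hSinv, Matrix.one_mulVec]
  have hkey : Sm⁻¹.mulVec v - u = Sm⁻¹.mulVec z := by
    rw [hzA, Matrix.mulVec_add, Matrix.mulVec_sub, Matrix.sub_mulVec, hSmh_u,
      Matrix.mulVec_sub, hSm_u]
    abel
  -- e z = ∫ W
  have hez : e z = ∫ ω, W ω ∂μ := by
    ext i
    rw [aux_integral_comp hWint i]
    rfl
  -- final chain
  have hlhs : Real.sqrt (∑ i, (Sm⁻¹.mulVec v i - u i) ^ 2) = ‖e (Sm⁻¹.mulVec z)‖ := by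
    rw [aux_norm_eq]
    congr 1
    refine Finset.sum_congr rfl fun i _ => ?_
    have : Sm⁻¹.mulVec v i - u i = (Sm⁻¹.mulVec v - u) i := rfl
    rw [this, hkey]
    rfl
  have hbound2 : ‖e (Sm⁻¹.mulVec z)‖ ≤ c * ((B + 2 * B * ‖U‖) * ε) := by
    rw [← hclm]
    calc ‖Matrix.toEuclideanCLM (𝕜 := ℝ) Sm⁻¹ (e z)‖
        ≤ ‖Matrix.toEuclideanCLM (𝕜 := ℝ) Sm⁻¹‖ * ‖e z‖ := ContinuousLinearMap.le_opNorm _ _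
      _ ≤ c * ‖e z‖ := mul_le_mul_of_nonneg_right hSop (norm_nonneg _)
      _ ≤ c * ((B + 2 * B * ‖U‖) * ε) := by
          refine mul_le_mul_of_nonneg_left ?_ hc
          rw [hez]
          calc ‖∫ ω, W ω ∂μ‖ ≤ ∫ ω, ‖W ω‖ ∂μ := norm_integral_le_integral_norm _
            _ ≤ ∫ ω, (B + 2 * B * ‖U‖) * ‖Δ ω‖ ∂μ := by
                refine integral_mono_ae hWint.norm
                  (hΔnorm_int.const_mul (B + 2 * B * ‖U‖)) ?_
                filter_upwards [hWbound] with ω h using h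
            _ = (B + 2 * B * ‖U‖) * ∫ ω, ‖Δ ω‖ ∂μ := integral_const_mul _ _
            _ ≤ (B + 2 * B * ‖U‖) * ε :=
                mul_le_mul_of_nonneg_left hΔl1 (by positivity)
  calc Real.sqrt (∑ i, (Sm⁻¹.mulVec v i - u i) ^ 2)
      = ‖e (Sm⁻¹.mulVec z)‖ := hlhs
    _ ≤ c * ((B + 2 * B * ‖U‖) * ε) := hbound2
    _ ≤ (2 * c ^ 2 * B ^ 3 + c * B) * ε := by
        nlinarith [mul_le_mul_of_nonneg_left hnormU (by positivity : (0:ℝ) ≤ 2 * B * c * ε),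
          norm_nonneg U, hε0, hc, hB]
end
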